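/- arXiv:2403.20072 — 2 statements merged into one kernel-verified Lean document; each statement's English description precedes it below -/
import Mathlib

section
/- Fundamental conservation-law identity: let u, K, L be C¹ vector fields and G a C¹ scalar field on a space-time domain in ℝ × ℝ³, with div L = 0. Then ∂/∂t (KᵀL) + div{ (u Kᵀ + (G − |u|²/2) I) L } = Lᵀ( DK/Dt + (∂u/∂x)ᵀK + ∇(G − |u|²/2) ) + Kᵀ( ∂L/∂t + (∂L/∂x)u + L div u − (∂u/∂x)L ), where D/Dt = ∂/∂t + uᵀ∇. -/
open Matrix

noncomputable section

abbrev V3 := Fin 3 → ℝ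

/-- spatial partial derivative in direction `i` -/
def pd (i : Fin 3) (f : V3 → ℝ) (x : V3) : ℝ := fderiv ℝ f x (Pi.single i 1)

/-- gradient of a scalar field -/
def grad (f : V3 → ℝ) (x : V3) : V3 := fun i => pd i f x

/-- divergence of a vector field -/
def vdiv (v : V3 → V3) (x : V3) : ℝ := ∑ i, pd i (fun y => v y i) x

/-- spatial Jacobian matrix ∂v/∂x -/
def jac (v : V3 → V3) (x : V3) : Matrix (Fin 3) (Fin 3) ℝ := fun i j => pd j (fun y => v y i) x

/-- curl of a vector field -/
def curl (v : V3 → V3) (x : V3) : V3 :=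
  ![pd 1 (fun y => v y 2) x - pd 2 (fun y => v y 1) x,
    pd 2 (fun y => v y 0) x - pd 0 (fun y => v y 2) x,
    pd 0 (fun y => v y 1) x - pd 1 (fun y => v y 0) x]

/-- cross product in ℝ³ -/
def cross (a b : V3) : V3 :=
  ![a 1 * b 2 - a 2 * b 1, a 2 * b 0 - a 0 * b 2, a 0 * b 1 - a 1 * b 0]

/-- partial time derivative of a scalar field -/
def pt (f : ℝ → V3 → ℝ) (t : ℝ) (x : V3) : ℝ := deriv (fun s => f s x) t

/-- partial time derivative of a vector field -/
def ptV (f : ℝ → V3 → V3) (t : ℝ) (x : V3) : V3 := fun i => pt (fun t x => f t x i) t x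

/-- material derivative D/Dt = ∂/∂t + uᵀ∇ of a scalar field -/
def Dmat (u : ℝ → V3 → V3) (f : ℝ → V3 → ℝ) (t : ℝ) (x : V3) : ℝ :=
  pt f t x + ∑ i, u t x i * pd i (f t) x

/-- material derivative of a vector field, componentwise -/
def DmatV (u f : ℝ → V3 → V3) (t : ℝ) (x : V3) : V3 :=
  fun i => Dmat u (fun t x => f t x i) t x

/-! With φ = G − |u|²/2, the product rule turns the left side into
`∂ₜK·L + K·∂ₜL + ∇(K·L)·u + (K·L) div u + ∇φ·L + φ div L`, where `∇(K·L)·u = L·(∂K/∂x)u + K·(∂L/∂x)u`.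
On the right, `L·(∂u/∂x)ᵀK` cancels against `K·(∂u/∂x)L`, and `φ div L` vanishes since `div L = 0`;
so ∇φ never has to be expanded. -/

section Slices

variable {E F H : Type*} [NormedAddCommGroup E] [NormedSpace ℝ E] [NormedAddCommGroup F]
  [NormedSpace ℝ F] [NormedAddCommGroup H] [NormedSpace ℝ H] {f : E → F → H}

theorem differentiableAt_right_of_uncurry (hf : Differentiable ℝ (Function.uncurry f))
    (t : E) (x : F) : DifferentiableAt ℝ (f t) x :=
  (hf (t, x)).comp x ((differentiableAt_const t).prodMk differentiableAt_id)

theorem differentiableAt_left_of_uncurry (hf : Differentiable ℝ (Function.uncurry f))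
    (t : E) (x : F) : DifferentiableAt ℝ (fun s => f s x) t :=
  (hf (t, x)).comp (f := fun s => (s, x)) t (differentiableAt_id.prodMk (differentiableAt_const x))

end Slices

theorem DifferentiableAt.dotProduct {E : Type*} [NormedAddCommGroup E] [NormedSpace ℝ E]
    {n : Type*} [Fintype n] {v w : E → n → ℝ} {x : E} (hv : DifferentiableAt ℝ v x)
    (hw : DifferentiableAt ℝ w x) : DifferentiableAt ℝ (fun y => v y ⬝ᵥ w y) x :=
  DifferentiableAt.fun_sum fun i _ =>
    (differentiableAt_pi.mp hv i).mul (differentiableAt_pi.mp hw i)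

section SpatialCalculus

variable {f : V3 → ℝ} {v w : V3 → V3} {x : V3} {i : Fin 3}

theorem pd_add {g : V3 → ℝ} (hf : DifferentiableAt ℝ f x) (hg : DifferentiableAt ℝ g x) :
    pd i (fun y => f y + g y) x = pd i f x + pd i g x := by
  simp [pd, fderiv_fun_add hf hg]

theorem pd_mul {g : V3 → ℝ} (hf : DifferentiableAt ℝ f x) (hg : DifferentiableAt ℝ g x) :
    pd i (fun y => f y * g y) x = pd i f x * g x + f x * pd i g x := by
  simp [pd, fderiv_fun_mul hf hg]
  ring

theorem pd_sum {ι : Type*} {s : Finset ι} {F : ι → V3 → ℝ}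
    (h : ∀ j ∈ s, DifferentiableAt ℝ (F j) x) :
    pd i (fun y => ∑ j ∈ s, F j y) x = ∑ j ∈ s, pd i (F j) x := by
  simp [pd, fderiv_fun_sum h]

theorem vdiv_add (hv : DifferentiableAt ℝ v x) (hw : DifferentiableAt ℝ w x) :
    vdiv (fun y => v y + w y) x = vdiv v x + vdiv w x := by
  simp only [vdiv, Pi.add_apply, ← Finset.sum_add_distrib]
  exact Finset.sum_congr rfl fun j _ =>
    pd_add (differentiableAt_pi.mp hv j) (differentiableAt_pi.mp hw j)

theorem vdiv_smul (hf : DifferentiableAt ℝ f x) (hv : DifferentiableAt ℝ v x) :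
    vdiv (fun y => f y • v y) x = grad f x ⬝ᵥ v x + f x * vdiv v x := by
  simp only [vdiv, grad, dotProduct, Pi.smul_apply, smul_eq_mul, Finset.mul_sum,
    ← Finset.sum_add_distrib]
  exact Finset.sum_congr rfl fun j _ => pd_mul hf (differentiableAt_pi.mp hv j)

theorem grad_dotProduct (hv : DifferentiableAt ℝ v x) (hw : DifferentiableAt ℝ w x) :
    grad (fun y => v y ⬝ᵥ w y) x = (jac v x)ᵀ *ᵥ w x + (jac w x)ᵀ *ᵥ v x := by
  ext i
  have hvw : ∀ j ∈ Finset.univ, DifferentiableAt ℝ (fun y => v y j * w y j) x := fun j _ =>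
    (differentiableAt_pi.mp hv j).mul (differentiableAt_pi.mp hw j)
  simp only [grad, dotProduct, pd_sum hvw, Pi.add_apply, mulVec, transpose_apply, jac,
    ← Finset.sum_add_distrib]
  refine Finset.sum_congr rfl fun j _ => ?_
  rw [pd_mul (differentiableAt_pi.mp hv j) (differentiableAt_pi.mp hw j)]
  ring

end SpatialCalculus

theorem DmatV_eq (u K : ℝ → V3 → V3) (t : ℝ) (x : V3) :
    DmatV u K t x = ptV K t x + jac (K t) x *ᵥ u t x := by
  ext i
  simp only [DmatV, Dmat, ptV, jac, mulVec, dotProduct, Pi.add_apply, mul_comm]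

theorem pt_dotProduct {K L : ℝ → V3 → V3} {t : ℝ} {x : V3}
    (hK : DifferentiableAt ℝ (fun s => K s x) t) (hL : DifferentiableAt ℝ (fun s => L s x) t) :
    pt (fun s y => K s y ⬝ᵥ L s y) t x = ptV K t x ⬝ᵥ L t x + K t x ⬝ᵥ ptV L t x := by
  have hKL : HasDerivAt (fun s => ∑ i, K s x i * L s x i)
      (∑ i, (ptV K t x i * L t x i + K t x i * ptV L t x i)) t :=
    HasDerivAt.fun_sum fun i _ =>
      (differentiableAt_pi.mp hK i).hasDerivAt.mul (differentiableAt_pi.mp hL i).hasDerivAt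
  simpa [pt, dotProduct, Finset.sum_add_distrib] using hKL.deriv

/-- Fundamental conservation-law identity (Lemma 3 of the paper). -/
theorem fundamental_conservation_identity (u K L : ℝ → V3 → V3) (G : ℝ → V3 → ℝ)
    (hu : ContDiff ℝ 1 (Function.uncurry u))
    (hK : ContDiff ℝ 1 (Function.uncurry K))
    (hL : ContDiff ℝ 1 (Function.uncurry L))
    (hG : ContDiff ℝ 1 (Function.uncurry G))
    (hdivL : ∀ t x, vdiv (L t) x = 0)
    (t : ℝ) (x : V3) :
    pt (fun s y => K s y ⬝ᵥ L s y) t x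
      + vdiv (fun y => (K t y ⬝ᵥ L t y) • u t y
          + (G t y - (u t y ⬝ᵥ u t y) / 2) • L t y) x
    = L t x ⬝ᵥ (DmatV u K t x + (jac (u t) x)ᵀ *ᵥ K t x
        + grad (fun y => G t y - (u t y ⬝ᵥ u t y) / 2) x)
      + K t x ⬝ᵥ (ptV L t x + jac (L t) x *ᵥ u t x
        + vdiv (u t) x • L t x - jac (u t) x *ᵥ L t x) := by
  have hu₁ := hu.differentiable one_ne_zero
  have hK₁ := hK.differentiable one_ne_zero
  have hL₁ := hL.differentiable one_ne_zero
  have hu' := differentiableAt_right_of_uncurry hu₁ t x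
  have hK' := differentiableAt_right_of_uncurry hK₁ t x
  have hL' := differentiableAt_right_of_uncurry hL₁ t x
  have hKL := hK'.dotProduct hL'
  have hG' := differentiableAt_right_of_uncurry (hG.differentiable one_ne_zero) t x
  have huu := hu'.dotProduct hu'
  have hφ : DifferentiableAt ℝ (fun y => G t y - (u t y ⬝ᵥ u t y) / 2) x := by fun_prop
  rw [pt_dotProduct (differentiableAt_left_of_uncurry hK₁ t x)
      (differentiableAt_left_of_uncurry hL₁ t x),
    vdiv_add (hKL.fun_smul hu') (hφ.fun_smul hL'), vdiv_smul hKL hu', vdiv_smul hφ hL',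
    grad_dotProduct hK' hL', hdivL, DmatV_eq]
  simp only [dotProduct_add, dotProduct_sub, dotProduct_smul, smul_eq_mul,
    dotProduct_comm _ (u t x), dotProduct_transpose_mulVec]
  rw [dotProduct_comm (ptV K t x), dotProduct_comm (grad _ x)]
  ring
end
end

section
/- Lie derivative of a two-form (vector representative) along the flow: with the flow φ and Jacobian F as above, let w(t,x) be a C¹ vector field and define w₀(t,X) = (det F) F⁻¹ w(t,φ(t,X)). Then ∂w₀/∂t (at fixed X) equals (det F) F⁻¹ (Dw/Dt + w div u − (∂u/∂x) w) evaluated at x = φ(t,X). In particular w₀ is time-independent iff Dw/Dt + w div u − (∂u/∂x)w = 0. -/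
/-! Since det F · F⁻¹ = adj F, the claim is about the derivative of adj F · (w ∘ φ). Because the
mixed partials of φ commute, ∂ₜ ∂ₓφ = ∂ₓ(u ∘ φ), i.e. F' = L F with L = ∂u/∂x at φ. For a 3 × 3
matrix with A' = L A one has adj(A)' = adj(A) (tr L − L), and tr L = div u; together with
(w ∘ φ)' = Dw/Dt the product rule gives the formula. -/

open Matrix

noncomputable section

section Slices

variable {E G : Type*} [NormedAddCommGroup E] [NormedSpace ℝ E] [NormedAddCommGroup G]
  [NormedSpace ℝ G] {f : ℝ → E → G} {t : ℝ} {x : E}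

theorem fderiv_slice_apply (hf : DifferentiableAt ℝ (Function.uncurry f) (t, x)) (v : E) :
    fderiv ℝ (f t) x v = fderiv ℝ (Function.uncurry f) (t, x) (0, v) := by
  have h : HasFDerivAt (f t) ((fderiv ℝ (Function.uncurry f) (t, x)).comp
      (ContinuousLinearMap.inr ℝ ℝ E)) x :=
    hf.hasFDerivAt.comp x ((hasFDerivAt_const t x).prodMk (hasFDerivAt_id x))
  rw [h.fderiv]
  rfl

theorem hasDerivAt_slice (hf : DifferentiableAt ℝ (Function.uncurry f) (t, x)) :
    HasDerivAt (fun s => f s x) (fderiv ℝ (Function.uncurry f) (t, x) (1, 0)) t :=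
  (hf.hasFDerivAt.comp_hasDerivAt t ((hasDerivAt_id t).prodMk (hasDerivAt_const t x)) :)

theorem differentiableAt_slice (hf : DifferentiableAt ℝ (Function.uncurry f) (t, x)) :
    DifferentiableAt ℝ (f t) x :=
  hf.comp x ((differentiableAt_const t).prodMk differentiableAt_id)

theorem hasDerivAt_comp_curve {γ : ℝ → E} {c : E}
    (hf : DifferentiableAt ℝ (Function.uncurry f) (t, γ t)) (hγ : HasDerivAt γ c t) :
    HasDerivAt (fun s => f s (γ s)) (deriv (fun s => f s (γ t)) t + fderiv ℝ (f t) (γ t) c) t := by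
  have h := hf.hasFDerivAt.comp_hasDerivAt t ((hasDerivAt_id t).prodMk hγ)
  refine h.congr_deriv ?_
  rw [(hasDerivAt_slice hf).deriv, fderiv_slice_apply hf, ← map_add]
  simp

theorem hasDerivAt_fderiv_slice_apply (hf : ContDiff ℝ 2 (Function.uncurry f)) (v : E) :
    HasDerivAt (fun s => fderiv ℝ (f s) x v)
      (fderiv ℝ (fun y => deriv (fun s => f s y) t) x v) t := by
  set g := Function.uncurry f
  have hg : Differentiable ℝ g := hf.differentiable (by norm_num)
  have hg' : DifferentiableAt ℝ (fderiv ℝ g) (t, x) :=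
    (hf.fderiv_right (m := 1) (by norm_num)).differentiable one_ne_zero _
  have hsymm := (hf.contDiffAt (x := (t, x))).isSymmSndFDerivAt (by simp)
  have hmixed : fderiv ℝ (fun y => deriv (fun s => f s y) t) x v
      = fderiv ℝ (fderiv ℝ g) (t, x) (0, v) (1, 0) := by
    have hd : (fun y => deriv (fun s => f s y) t) = fun y => fderiv ℝ g (t, y) (1, 0) :=
      funext fun y => (hasDerivAt_slice (hg _)).deriv
    have h : HasFDerivAt (fun y => fderiv ℝ g (t, y) (1, 0))
        ((ContinuousLinearMap.apply ℝ G ((1 : ℝ), (0 : E))).comp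
          ((fderiv ℝ (fderiv ℝ g) (t, x)).comp (ContinuousLinearMap.inr ℝ ℝ E))) x :=
      (ContinuousLinearMap.apply ℝ G ((1 : ℝ), (0 : E))).hasFDerivAt.comp x
        (hg'.hasFDerivAt.comp x ((hasFDerivAt_const t x).prodMk (hasFDerivAt_id x)))
    rw [hd, h.fderiv]
    rfl
  have hcurve : HasDerivAt (fun s => fderiv ℝ g (s, x) (0, v))
      (fderiv ℝ (fderiv ℝ g) (t, x) (1, 0) (0, v)) t := by
    have h1 : HasDerivAt (fun s => fderiv ℝ g (s, x)) (fderiv ℝ (fderiv ℝ g) (t, x) (1, 0)) t :=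
      hg'.hasFDerivAt.comp_hasDerivAt t ((hasDerivAt_id t).prodMk (hasDerivAt_const t x))
    have h2 := h1.clm_apply (hasDerivAt_const t ((0 : ℝ), v))
    rw [map_zero, add_zero] at h2
    exact h2
  rw [hmixed, hsymm (0, v) (1, 0)]
  refine hcurve.congr_of_eventuallyEq (Filter.Eventually.of_forall fun s => ?_)
  exact fderiv_slice_apply (hg (s, x)) v

end Slices

theorem fderiv_apply_eq_sum_pd {g : V3 → ℝ} {x : V3} (c : V3) :
    fderiv ℝ g x c = ∑ m, c m * pd m g x := by
  conv_lhs => rw [← Finset.univ_sum_single c]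
  rw [map_sum]
  refine Finset.sum_congr rfl fun m _ => ?_
  rw [pd, ← smul_eq_mul, ← map_smul, ← Pi.single_smul', smul_eq_mul, mul_one]

theorem jac_eq_toMatrix' {v : V3 → V3} {x : V3} (hv : DifferentiableAt ℝ v x) :
    jac v x = LinearMap.toMatrix' (fderiv ℝ v x : V3 →ₗ[ℝ] V3) := by
  ext i j
  rw [LinearMap.toMatrix'_apply, jac, pd, fderiv_pi (fun i => (differentiableAt_pi.mp hv) i)]
  rfl

theorem jac_comp {g f : V3 → V3} {x : V3} (hg : DifferentiableAt ℝ g (f x))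
    (hf : DifferentiableAt ℝ f x) : jac (g ∘ f) x = jac g (f x) * jac f x := by
  rw [jac_eq_toMatrix' (hg.comp x hf), jac_eq_toMatrix' hg, jac_eq_toMatrix' hf,
    fderiv_comp x hg hf, ← LinearMap.toMatrix'_comp]
  rfl

theorem vdiv_eq_trace_jac (v : V3 → V3) (x : V3) : vdiv v x = (jac v x).trace := rfl

theorem hasDerivAt_adjugate_fin_three {A : ℝ → Matrix (Fin 3) (Fin 3) ℝ}
    {L : Matrix (Fin 3) (Fin 3) ℝ} {t : ℝ}
    (hA : ∀ k l, HasDerivAt (fun s => A s k l) ((L * A t) k l) t) (i j : Fin 3) :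
    HasDerivAt (fun s => (A s).adjugate i j) (((A t).adjugate * (L.trace • 1 - L)) i j) t := by
  simp only [Matrix.mul_apply, Fin.sum_univ_three] at hA
  fin_cases i <;> fin_cases j <;>
    simp only [adjugate_fin_three, Fin.isValue, Fin.zero_eta, Fin.mk_one, Fin.reduceFinMk,
      of_apply, cons_val', cons_val_zero, cons_val_one, cons_val_two, empty_val',
      cons_val_fin_one, head_cons, tail_cons, head_fin_const] <;>
    first
    | exact (((hA _ _).mul (hA _ _)).sub ((hA _ _).mul (hA _ _))).congr_deriv (by
        simp [Matrix.mul_apply, Fin.sum_univ_three, Matrix.trace_fin_three, Matrix.one_apply]; ring)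
    | exact (((hA _ _).mul (hA _ _)).neg.add ((hA _ _).mul (hA _ _))).congr_deriv (by
        simp [Matrix.mul_apply, Fin.sum_univ_three, Matrix.trace_fin_three, Matrix.one_apply]; ring)

theorem hasDerivAt_mulVec_apply {m n : Type*} [Fintype n] {A : ℝ → Matrix m n ℝ}
    {A' : Matrix m n ℝ} {v : ℝ → n → ℝ} {v' : n → ℝ} {t : ℝ}
    (hA : ∀ i j, HasDerivAt (fun s => A s i j) (A' i j) t)
    (hv : ∀ j, HasDerivAt (fun s => v s j) (v' j) t) (i : m) :
    HasDerivAt (fun s => (A s *ᵥ v s) i) ((A' *ᵥ v t + A t *ᵥ v') i) t := by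
  simp only [mulVec, dotProduct, Pi.add_apply, ← Finset.sum_add_distrib]
  exact HasDerivAt.fun_sum fun j _ => (hA i j).mul (hv j)

section Flow

variable {u φ : ℝ → V3 → V3} {t : ℝ} {X : V3}

theorem hasDerivAt_flow (hφ : DifferentiableAt ℝ (Function.uncurry φ) (t, X))
    (hflow : ∀ k, deriv (fun s => φ s X k) t = u t (φ t X) k) :
    HasDerivAt (fun s => φ s X) (u t (φ t X)) t := by
  have h := hasDerivAt_slice hφ
  refine h.congr_deriv (funext fun k => ?_)
  rw [← hflow k, (hasDerivAt_pi.mp h k).deriv]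

theorem hasDerivAt_comp_curve_eq_dmat {f : ℝ → V3 → ℝ} {γ : ℝ → V3}
    (hf : DifferentiableAt ℝ (Function.uncurry f) (t, γ t)) (hγ : HasDerivAt γ (u t (γ t)) t) :
    HasDerivAt (fun s => f s (γ s)) (Dmat u f t (γ t)) t := by
  have h := hasDerivAt_comp_curve hf hγ
  rwa [fderiv_apply_eq_sum_pd] at h

theorem hasDerivAt_jac_flow (hφ : ContDiff ℝ 2 (Function.uncurry φ))
    (hu : DifferentiableAt ℝ (u t) (φ t X))
    (hflow : ∀ Y k, deriv (fun s => φ s Y k) t = u t (φ t Y) k) (k l : Fin 3) :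
    HasDerivAt (fun s => jac (φ s) X k l) ((jac (u t) (φ t X) * jac (φ t) X) k l) t := by
  have h := hasDerivAt_fderiv_slice_apply (x := X) (t := t)
    (f := fun s y => φ s y k) (contDiff_pi.mp hφ k) (Pi.single l 1)
  simp only [hflow] at h
  rw [← jac_comp hu (differentiableAt_slice (hφ.differentiable (by norm_num) (t, X)))]
  exact h

end Flow

/-- Lie derivative of a two-form (via its vector representative) along the flow. -/
theorem lie_derivative_two_form (u φ w : ℝ → V3 → V3)
    (F : ℝ → V3 → Matrix (Fin 3) (Fin 3) ℝ)
    (hu : ContDiff ℝ 1 (Function.uncurry u))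
    (hφ : ContDiff ℝ 2 (Function.uncurry φ))
    (hw : ContDiff ℝ 1 (Function.uncurry w))
    (hflow : ∀ t X i, deriv (fun s => φ s X i) t = u t (φ t X) i)
    (hF : ∀ t X, F t X = jac (φ t) X)
    (hdet : ∀ t X, (F t X).det ≠ 0)
    (t : ℝ) (X : V3) (i : Fin 3) :
    deriv (fun s => ((F s X).det • ((F s X)⁻¹ *ᵥ w s (φ s X))) i) t
      = ((F t X).det • ((F t X)⁻¹ *ᵥ
          (DmatV u w t (φ t X) + vdiv (u t) (φ t X) • w t (φ t X)
            - jac (u t) (φ t X) *ᵥ w t (φ t X)))) i := by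
  have hadj : ∀ s b, (F s X).det • ((F s X)⁻¹ *ᵥ b) = (jac (φ s) X).adjugate *ᵥ b := by
    intro s b
    rw [det_smul_inv_mulVec_eq_cramer _ _ (hdet s X).isUnit, cramer_eq_adjugate_mulVec, hF]
  simp only [hadj]
  have hγ : HasDerivAt (fun s => φ s X) (u t (φ t X)) t :=
    hasDerivAt_flow (hφ.differentiable (by norm_num) _) (hflow t X)
  have hJ := hasDerivAt_jac_flow hφ
    (differentiableAt_slice (hu.differentiable one_ne_zero (t, φ t X))) (hflow t)
  have hDw : ∀ j, HasDerivAt (fun s => w s (φ s X) j) (DmatV u w t (φ t X) j) t := fun j =>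
    hasDerivAt_comp_curve_eq_dmat (f := fun s y => w s y j)
      ((contDiff_pi.mp hw j).differentiable one_ne_zero _) hγ
  rw [(hasDerivAt_mulVec_apply (hasDerivAt_adjugate_fin_three hJ) hDw i).deriv,
    vdiv_eq_trace_jac]
  simp only [mulVec_add, mulVec_sub, mulVec_smul, ← mulVec_mulVec, sub_mulVec, smul_mulVec,
    one_mulVec]
  exact congrFun (by abel) i
end
end
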